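/- arXiv:2305.06982 — 3 statements merged into one kernel-verified Lean document; each statement's English description precedes it below -/
import Mathlib

section
/- (Padding Lemma) Let A ⊆ ℕ be an infinite computably enumerable set and let θ be a quasi-Gödel numbering of S_A. Then θ has a one-to-one padding function: there is a total computable p : ℕ → ℕ → ℕ which is injective as a function of the pair (i,j) and satisfies θ (p i j) = θ i for all i and j. -/
/-- `r : ℕ →. ℕ` is an initial-segment function for `A`: its domain is empty or
equals `{m | m < a}` for some `a ∈ A`. -/
def IsInitSeg (A : Set ℕ) (r : ℕ →. ℕ) : Prop :=
  {x : ℕ | (r x).Dom} = (∅ : Set ℕ) ∨ ∃ a ∈ A, {x : ℕ | (r x).Dom} = {m : ℕ | m < a}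

/-- `SA A` is the class of unary partial functions that are either total computable
or initial-segment functions for `A`. -/
def SA (A : Set ℕ) : Set (ℕ →. ℕ) :=
  {r | (∃ f : ℕ → ℕ, Computable f ∧ ∀ x, r x = Part.some (f x)) ∨ IsInitSeg A r}

/-- The extended graph of a unary partial function. -/
def graphE (q : ℕ →. ℕ) : Set ℕ :=
  {n | ∃ y, n = Nat.pair y 0} ∪ {n | ∃ x z, q x = Part.some z ∧ n = Nat.pair x (z + 1)}

/-- The graph of a unary partial function. -/
def pgraph (q : ℕ →. ℕ) : Set ℕ :=
  {n | ∃ x z, q x = Part.some z ∧ n = Nat.pair x z}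

/-- Condition (QGN I): the extended graph of the universal function of `θ` is
enumerated by a total computable function. -/
def QGN1 (θ : ℕ → ℕ →. ℕ) : Prop :=
  ∃ h : ℕ → ℕ, Computable h ∧
    Set.range h = {n | ∃ w, n = Nat.pair w 0} ∪
      {n | ∃ i x z, θ i x = Part.some z ∧ n = Nat.pair (Nat.pair i x) (z + 1)}

/-- Condition (QGN II). -/
def QGN2 (A : Set ℕ) (θ : ℕ → ℕ →. ℕ) : Prop :=
  ∀ k : ℕ → ℕ → ℕ, Computable₂ k →
    ∃ v : ℕ → ℕ, Computable v ∧
      ∀ i, ∀ r ∈ SA A, Set.range (k i) = graphE r → θ (v i) = r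

/-- A quasi-Gödel numbering of `SA A`. -/
def QuasiGodel (A : Set ℕ) (θ : ℕ → ℕ →. ℕ) : Prop :=
  Set.range θ = SA A ∧ QGN1 θ ∧ QGN2 A θ

/-- A set of naturals is computably enumerable. -/
def CEset (C : Set ℕ) : Prop :=
  C = ∅ ∨ ∃ g : ℕ → ℕ, Computable g ∧ C = Set.range g

/-- The standard Gödel numbering of the unary partial recursive functions. -/
def phi (i : ℕ) : ℕ →. ℕ :=
  Nat.Partrec.Code.eval (Denumerable.ofNat Nat.Partrec.Code i)

/-!
By (QGN I) the map `⟨i, x⟩ ↦ θ i x` is partial recursive (search the enumeration for an entry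
`⟨⟨i, x⟩, z + 1⟩`), and (QGN II), applied to a uniform enumeration of the extended graphs of `phi`,
gives a computable `v` with `θ (v e) = phi e` whenever `phi e ∈ SA A = Set.range θ`.

Kleene's recursion theorem yields a program `c` whose node `(i, n, b)`, the code
`curry c ⟨⟨i, n⟩, b⟩`, computes `θ i` if the `v`-translates of the nodes `(i, n, 0)`, …,
`(i, n, n - 1)` are pairwise distinct, and the constant function `b` otherwise. The second
alternative refutes itself: two nodes `b ≠ b'` with the same translate would make that translate
compute both constants. So each block `(i, n, ·)` yields `n` distinct `θ`-indices of `θ i`, and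
choosing greedily a fresh index from the block of size `⟨i, j⟩ + 1` gives an injective padding
function.
-/

open Nat.Partrec Code Encodable

theorem PrimrecRel.list_mem {α : Type*} [Primcodable α] [DecidableEq α] :
    PrimrecRel fun (a : α) (l : List α) => a ∈ l :=
  ((PrimrecRel.exists_mem_list Primrec.eq).comp Primrec.snd Primrec.fst).of_eq <| by simp

theorem PrimrecPred.list_nodup {α : Type*} [Primcodable α] [DecidableEq α] :
    PrimrecPred fun l : List α => l.Nodup := by
  have hcount : PrimrecRel fun (a : α) (l : List α) => l.count a ≤ 1 :=
    (Primrec.nat_le.comp (Primrec.list_length.comp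
      ((PrimrecRel.listFilter Primrec.eq).comp Primrec.snd Primrec.fst))
      (Primrec.const 1)).of_eq fun _ => by dsimp only; rw [List.count_eq_length_filter]; rfl
  refine ((PrimrecRel.forall_mem_list hcount).comp Primrec.id Primrec.id).of_eq fun l => ?_
  rw [List.nodup_iff_count_le_one]
  exact ⟨fun h a => if ha : a ∈ l then h a ha else by simp [List.count_eq_zero_of_not_mem ha],
    fun h a _ => h a⟩

theorem Computable.list_map_range {α σ : Type*} [Primcodable α] [Primcodable σ]
    {f : α → ℕ → σ} (hf : Computable₂ f) : Computable₂ fun a n => (List.range n).map (f a) := by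
  have hstep : Computable₂ fun (q : α × ℕ) (p : ℕ × List σ) => p.2 ++ [f q.1 p.1] :=
    (Computable.list_concat.comp (Computable.snd.comp Computable.snd)
      (hf.comp (Computable.fst.comp Computable.fst) (Computable.fst.comp Computable.snd))).to₂
  refine (Computable.nat_rec Computable.snd (Computable.const []) hstep).of_eq fun ⟨a, n⟩ => ?_
  induction n with
  | zero => rfl
  | succ n ih => simp only at ih ⊢; rw [ih, List.range_succ, List.map_append]; rfl

def firstNotMem (L l : List ℕ) : ℕ := (L.filter (· ∉ l)).headI

theorem firstNotMem_spec {L l : List ℕ} (hL : L.Nodup) (hlen : l.length < L.length) :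
    firstNotMem L l ∈ L ∧ firstNotMem L l ∉ l := by
  have hne : L.filter (· ∉ l) ≠ [] := by
    intro h
    have hsub : L ⊆ l := fun x hx => by
      by_contra hxl
      exact List.not_mem_nil (h ▸ List.mem_filter.2 ⟨hx, by simpa using hxl⟩)
    exact absurd (hL.subperm hsub).length_le (not_le.2 hlen)
  obtain ⟨x, t, hxt⟩ := List.exists_cons_of_ne_nil hne
  have hx : x ∈ L.filter (· ∉ l) := hxt ▸ List.mem_cons_self
  rw [firstNotMem, hxt, List.headI_cons]
  simpa using hx

theorem primrec₂_firstNotMem : Primrec₂ firstNotMem :=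
  Primrec.list_headI.comp₂ (PrimrecRel.listFilter PrimrecRel.list_mem.not)

section GreedyChoice

variable (B : ℕ → List ℕ)

def greedyPrefix : ℕ → List ℕ
  | 0 => []
  | N + 1 => greedyPrefix N ++ [firstNotMem (B N) (greedyPrefix N)]

def greedyChoice (N : ℕ) : ℕ := firstNotMem (B N) (greedyPrefix B N)

theorem greedyPrefix_eq_map_range (N : ℕ) :
    greedyPrefix B N = (List.range N).map (greedyChoice B) := by
  induction N with
  | zero => rfl
  | succ N ih => rw [greedyPrefix, List.range_succ, List.map_append, ← ih]; rfl

variable {B}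

theorem computable_greedyChoice (hB : Computable B) : Computable (greedyChoice B) := by
  have hstep : Computable₂ fun (_ : ℕ) (p : ℕ × List ℕ) => p.2 ++ [firstNotMem (B p.1) p.2] :=
    (Computable.list_concat.comp (Computable.snd.comp Computable.snd)
      (primrec₂_firstNotMem.to_comp.comp (hB.comp (Computable.fst.comp Computable.snd))
        (Computable.snd.comp Computable.snd))).to₂
  have hprefix : Computable (greedyPrefix B) :=
    (Computable.nat_rec Computable.id (Computable.const []) hstep).of_eq fun N => by
      induction N with
      | zero => rfl
      | succ N ih => simp only [id] at ih ⊢; rw [ih]; rfl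
  exact primrec₂_firstNotMem.to_comp.comp hB hprefix

theorem greedyChoice_mem_and_injective (hlen : ∀ N, N < (B N).length)
    (hnd : ∀ N, (B N).Nodup) : (∀ N, greedyChoice B N ∈ B N) ∧ (greedyChoice B).Injective := by
  have hspec N :
      greedyChoice B N ∈ B N ∧ greedyChoice B N ∉ (List.range N).map (greedyChoice B) := by
    rw [← greedyPrefix_eq_map_range]
    exact firstNotMem_spec (hnd N) (by simpa [greedyPrefix_eq_map_range] using hlen N)
  have hne {M N} (h : M < N) : greedyChoice B M ≠ greedyChoice B N := fun heq =>
    (hspec N).2 (List.mem_map.2 ⟨M, List.mem_range.2 h, heq⟩)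
  refine ⟨fun N => (hspec N).1, fun M N heq => ?_⟩
  by_contra hMN
  rcases Nat.lt_or_gt_of_ne hMN with h | h
  exacts [hne h heq, hne h heq.symm]

end GreedyChoice

theorem pair_succ_mem_graphE_iff {q : ℕ →. ℕ} {x z : ℕ} :
    Nat.pair x (z + 1) ∈ graphE q ↔ q x = Part.some z := by
  simp [graphE, Nat.pair_eq_pair]

def graphEntry (x n : ℕ) : Option ℕ :=
  if n.unpair.1 = x ∧ n.unpair.2 ≠ 0 then some (n.unpair.2 - 1) else none

theorem mem_graphEntry_iff {x n z : ℕ} : z ∈ graphEntry x n ↔ n = Nat.pair x (z + 1) := by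
  obtain ⟨a, b, rfl⟩ : ∃ a b, n = Nat.pair a b := ⟨_, _, (Nat.pair_unpair n).symm⟩
  simp only [graphEntry, Nat.unpair_pair, Nat.pair_eq_pair]
  split_ifs <;> simp <;> omega

theorem primrec₂_graphEntry : Primrec₂ graphEntry := by
  have hfst : Primrec fun p : ℕ × ℕ => p.2.unpair.1 :=
    Primrec.fst.comp (Primrec.unpair.comp Primrec.snd)
  have hsnd : Primrec fun p : ℕ × ℕ => p.2.unpair.2 :=
    Primrec.snd.comp (Primrec.unpair.comp Primrec.snd)
  exact Primrec.ite
    ((Primrec.eq.comp hfst Primrec.fst).and (Primrec.eq.comp hsnd (Primrec.const 0)).not)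
    (Primrec.option_some.comp (Primrec.pred.comp hsnd)) (Primrec.const none)

theorem partrec_of_range_eq_graphE {h : ℕ → ℕ} (hh : Computable h) {q : ℕ →. ℕ}
    (hq : Set.range h = graphE q) : Partrec q := by
  have sound {x z} (hz : z ∈ Nat.rfindOpt fun s => graphEntry x (h s)) : q x = Part.some z := by
    obtain ⟨s, hs⟩ := Nat.rfindOpt_spec hz
    rw [← pair_succ_mem_graphE_iff, ← hq, ← mem_graphEntry_iff.1 hs]
    exact Set.mem_range_self s
  refine (Partrec.rfindOpt (primrec₂_graphEntry.to_comp.comp Computable.fst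
    (hh.comp Computable.snd)).to₂).of_eq fun x => Part.ext fun z => ⟨fun hz => ?_, fun hz => ?_⟩
  · exact Part.eq_some_iff.1 (sound hz)
  · show z ∈ Nat.rfindOpt fun s => graphEntry x (h s)
    obtain ⟨s, hs⟩ : Nat.pair x (z + 1) ∈ Set.range h :=
      hq ▸ pair_succ_mem_graphE_iff.2 (Part.eq_some_iff.2 hz)
    obtain ⟨w, hw⟩ := Part.dom_iff_mem.1
      ((Nat.rfindOpt_dom (f := fun s => graphEntry x (h s))).2 ⟨s, z, mem_graphEntry_iff.2 hs⟩)
    rwa [Part.mem_unique hz (Part.eq_some_iff.1 (sound hw))]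

theorem QGN1.partrec_uncurry {θ : ℕ → ℕ →. ℕ} (hθ : QGN1 θ) :
    Partrec fun n : ℕ => θ n.unpair.1 n.unpair.2 := by
  obtain ⟨h, hh, hrange⟩ := hθ
  refine partrec_of_range_eq_graphE hh (hrange.trans ?_)
  ext n
  simp only [graphE, Set.mem_union]
  refine or_congr Iff.rfl ⟨?_, ?_⟩
  · rintro ⟨i, x, z, hz, rfl⟩
    exact ⟨Nat.pair i x, z, by simpa using hz, rfl⟩
  · rintro ⟨m, z, hz, rfl⟩
    exact ⟨m.unpair.1, m.unpair.2, z, hz, by rw [Nat.pair_unpair]⟩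

/-- The entry for `n = ⟨x, s⟩` records the outcome of running `phi e x` for `s` steps; as
`evaln 0` never halts, every `⟨x, 0⟩` is enumerated. -/
def graphEnum (e n : ℕ) : ℕ :=
  Nat.pair n.unpair.1 (encode (evaln n.unpair.2 (Denumerable.ofNat Code e) n.unpair.1))

theorem computable₂_graphEnum : Computable₂ graphEnum :=
  (Primrec₂.natPair.comp (Primrec.fst.comp (Primrec.unpair.comp Primrec.snd))
    (Primrec.encode.comp (primrec_evaln.comp
      (((Primrec.snd.comp (Primrec.unpair.comp Primrec.snd)).pair
        ((Primrec.ofNat Code).comp Primrec.fst)).pair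
        (Primrec.fst.comp (Primrec.unpair.comp Primrec.snd)))))).to_comp.of_eq fun _ => rfl

theorem range_graphEnum (e : ℕ) : Set.range (graphEnum e) = graphE (phi e) := by
  ext n
  constructor
  · rintro ⟨m, rfl⟩
    cases hz : evaln m.unpair.2 (Denumerable.ofNat Code e) m.unpair.1 with
    | none => exact Or.inl ⟨m.unpair.1, by simp [graphEnum, hz]⟩
    | some z =>
      refine Or.inr ⟨m.unpair.1, z, Part.eq_some_iff.2 (evaln_sound hz), by simp [graphEnum, hz]⟩
  · rintro (⟨x, rfl⟩ | ⟨x, z, hz, rfl⟩)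
    · exact ⟨Nat.pair x 0, by simp [graphEnum, evaln]⟩
    · obtain ⟨s, hs⟩ := evaln_complete.1 (Part.eq_some_iff.1 hz)
      exact ⟨Nat.pair x s, by simp [graphEnum, Option.mem_def.1 hs]⟩

theorem const_mem_SA (A : Set ℕ) (b : ℕ) : (fun _ => Part.some b : ℕ →. ℕ) ∈ SA A :=
  Or.inl ⟨fun _ => b, Computable.const b, fun _ => rfl⟩

section Blocks

variable {θ : ℕ → ℕ →. ℕ} {v : ℕ → ℕ}

def node (c : Code) (i n b : ℕ) : ℕ := encode (curry c (Nat.pair (Nat.pair i n) b))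

def block (v : ℕ → ℕ) (c : Code) (i n : ℕ) : List ℕ :=
  (List.range n).map fun b => v (node c i n b)

def nodeFun (θ : ℕ → ℕ →. ℕ) (v : ℕ → ℕ) (c : Code) (i n b : ℕ) : ℕ →. ℕ := fun x =>
  if (block v c i n).Nodup then θ i x else Part.some b

theorem nodeFun_of_nodup {c : Code} {i n : ℕ} (h : (block v c i n).Nodup) (b : ℕ) :
    nodeFun θ v c i n b = θ i :=
  funext fun _ => if_pos h

theorem nodeFun_of_not_nodup {c : Code} {i n : ℕ} (h : ¬(block v c i n).Nodup) (b : ℕ) :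
    nodeFun θ v c i n b = fun _ => Part.some b :=
  funext fun _ => if_neg h

theorem computable_block (hv : Computable v) :
    Computable fun p : Code × ℕ × ℕ => block v p.1 p.2.1 p.2.2 := by
  have hnode : Computable₂ fun (p : Code × ℕ × ℕ) (b : ℕ) => v (node p.1 p.2.1 p.2.2 b) :=
    hv.comp (Primrec.encode.comp (primrec₂_curry.comp (Primrec.fst.comp Primrec.fst)
      (Primrec₂.natPair.comp (Primrec₂.natPair.comp
        (Primrec.fst.comp (Primrec.snd.comp Primrec.fst))
        (Primrec.snd.comp (Primrec.snd.comp Primrec.fst))) Primrec.snd))).to_comp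
  exact (Computable.list_map_range hnode).comp Computable.id
    (Computable.snd.comp Computable.snd)

theorem exists_phi_node_eq_nodeFun (hU : Partrec fun m : ℕ => θ m.unpair.1 m.unpair.2)
    (hv : Computable v) : ∃ c : Code, ∀ i n b, phi (node c i n b) = nodeFun θ v c i n b := by
  let body (c : Code) (m : ℕ) : Part ℕ :=
    nodeFun θ v c m.unpair.1.unpair.1.unpair.1 m.unpair.1.unpair.1.unpair.2 m.unpair.1.unpair.2
      m.unpair.2
  have hbody : Partrec₂ body := by
    have hm : Primrec fun p : Code × ℕ => p.2.unpair := Primrec.unpair.comp Primrec.snd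
    have hin : Primrec fun p : Code × ℕ => p.2.unpair.1.unpair.1.unpair :=
      Primrec.unpair.comp (Primrec.fst.comp (Primrec.unpair.comp (Primrec.fst.comp hm)))
    have hb : Primrec fun p : Code × ℕ => p.2.unpair.1.unpair.2 :=
      Primrec.snd.comp (Primrec.unpair.comp (Primrec.fst.comp hm))
    have hblock : Computable fun p : Code × ℕ =>
        block v p.1 p.2.unpair.1.unpair.1.unpair.1 p.2.unpair.1.unpair.1.unpair.2 :=
      ((computable_block hv).comp (Computable.fst.pair hin.to_comp) :)
    have hθi : Partrec fun p : Code × ℕ => θ p.2.unpair.1.unpair.1.unpair.1 p.2.unpair.2 :=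
      (hU.comp (Primrec₂.natPair.comp (Primrec.fst.comp hin) (Primrec.snd.comp hm)).to_comp).of_eq
        fun _ => by simp
    exact (Partrec.cond ((PrimrecPred.list_nodup (α := ℕ)).decide.to_comp.comp hblock) hθi
      (Partrec.some.comp hb.to_comp)).of_eq fun p => by simp [body, nodeFun]
  obtain ⟨c, hc⟩ := fixed_point₂ hbody
  refine ⟨c, fun i n b => funext fun x => ?_⟩
  simp [phi, node, eval_curry, hc, body]

theorem block_nodup_and_mem (hvθ : ∀ e, phi e ∈ Set.range θ → θ (v e) = phi e)
    (hconst : ∀ b, (fun _ => Part.some b : ℕ →. ℕ) ∈ Set.range θ) {c : Code}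
    (hc : ∀ i n b, phi (node c i n b) = nodeFun θ v c i n b) (i n : ℕ) :
    (block v c i n).Nodup ∧ ∀ j ∈ block v c i n, θ j = θ i := by
  have hθv b : θ (v (node c i n b)) = nodeFun θ v c i n b := by
    have hmem : nodeFun θ v c i n b ∈ Set.range θ := by
      by_cases hnd : (block v c i n).Nodup
      · exact nodeFun_of_nodup hnd b ▸ Set.mem_range_self i
      · exact nodeFun_of_not_nodup hnd b ▸ hconst b
    rw [hvθ _ (hc i n b ▸ hmem), hc]
  have hnd : (block v c i n).Nodup := by
    by_contra hnd
    refine hnd (List.Nodup.map_on (fun b _ b' _ heq => ?_) List.nodup_range)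
    have hb := (hθv b).trans (nodeFun_of_not_nodup hnd b)
    have hb' := (hθv b').trans (nodeFun_of_not_nodup hnd b')
    exact Part.some_injective (congrFun (hb.symm.trans (heq ▸ hb')) 0)
  refine ⟨hnd, fun j hj => ?_⟩
  obtain ⟨b, -, rfl⟩ := List.mem_map.1 hj
  rw [hθv, nodeFun_of_nodup hnd]

theorem exists_padding_blocks (hU : Partrec fun m : ℕ => θ m.unpair.1 m.unpair.2)
    (hv : Computable v) (hvθ : ∀ e, phi e ∈ Set.range θ → θ (v e) = phi e)
    (hconst : ∀ b, (fun _ => Part.some b : ℕ →. ℕ) ∈ Set.range θ) :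
    ∃ B : ℕ → ℕ → List ℕ, Computable₂ B ∧
      ∀ i n, (B i n).length = n ∧ (B i n).Nodup ∧ ∀ j ∈ B i n, θ j = θ i := by
  obtain ⟨c, hc⟩ := exists_phi_node_eq_nodeFun hU hv
  refine ⟨block v c, ((computable_block hv).comp
    ((Computable.const c).pair Computable.id) :), fun i n => ?_⟩
  exact ⟨by simp [block], block_nodup_and_mem hvθ hconst hc i n⟩

end Blocks

theorem padding_lemma_general (A : Set ℕ) (θ : ℕ → ℕ →. ℕ) (hθ : QuasiGodel A θ) :
    ∃ p : ℕ → ℕ → ℕ, Computable₂ p ∧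
      Function.Injective (fun n : ℕ × ℕ => p n.1 n.2) ∧
      ∀ i j, θ (p i j) = θ i := by
  obtain ⟨hrange, hQ1, hQ2⟩ := hθ
  obtain ⟨v, hv, hvθ⟩ := hQ2 graphEnum computable₂_graphEnum
  obtain ⟨B, hB, hBspec⟩ := exists_padding_blocks hQ1.partrec_uncurry hv
    (fun e he => hvθ e (phi e) (hrange ▸ he) (range_graphEnum e))
    (fun b => hrange ▸ const_mem_SA A b)
  let B' (N : ℕ) := B N.unpair.1 (N + 1)
  obtain ⟨hmem, hinj⟩ := greedyChoice_mem_and_injective (B := B')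
    (fun N => by simp [B', (hBspec _ _).1]) (fun N => (hBspec _ _).2.1)
  refine ⟨fun i j => greedyChoice B' (Nat.pair i j), ?_, hinj.comp Nat.pairEquiv.injective,
    fun i j => ?_⟩
  · exact (computable_greedyChoice (hB.comp (Computable.fst.comp Computable.unpair)
      Computable.succ)).comp₂ Primrec₂.natPair.to_comp
  · simpa [B'] using (hBspec _ _).2.2 _ (hmem (Nat.pair i j))

/-- Padding Lemma: every quasi-Gödel numbering has a one-to-one padding function. -/
theorem padding_lemma (A : Set ℕ) (hAinf : A.Infinite) (hAce : CEset A)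
    (θ : ℕ → ℕ →. ℕ) (hθ : QuasiGodel A θ) :
    ∃ p : ℕ → ℕ → ℕ, Computable₂ p ∧
      Function.Injective (fun n : ℕ × ℕ => p n.1 n.2) ∧
      ∀ i j, θ (p i j) = θ i :=
  padding_lemma_general A θ hθ
end

section
/- (No effective totalization) Let A ⊆ ℕ be an infinite computably enumerable set and let θ be a quasi-Gödel numbering of S_A. Then there is no total computable q : ℕ → ℕ such that for every i with θ i an initial-segment function for A, the function θ (q i) is total and graph(θ i) ⊊ graph(θ (q i)), where graph(r) = {Nat.pair x z | r x = Part.some z}. That is, although every initial-segment function extends to a total computable function, no total computable function can produce, from any index of an initial-segment function, an index of a total extension of it. -/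
/-!
Fix `a ∈ A` with `0 < a`. By (QGN I) the universal function of `θ` is partial computable, so
for a computable `q` the function `D j x := θ (q (phi j 0)) 0 + 1` for `x < a` (undefined for
`x ≥ a`) is partial computable, and each `D j` is an initial-segment function, whether or not
`phi j 0` or `θ (q (phi j 0)) 0` halts. (QGN II) gives a computable `v` with `θ (v j) = D j`,
and the recursion theorem an index `e` with `phi e 0 = v e`. For `m := v e`, `θ m = D e` is an
initial segment, so `θ (q m)` would be total and extend it, forcing
`θ (q m) 0 = θ (q m) 0 + 1`.
-/

open Nat.Partrec (Code)

theorem Nat.mem_rfindOpt_iff_of_unique {α : Type*} {f : ℕ → Option α}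
    (hf : ∀ {a b m n}, a ∈ f m → b ∈ f n → a = b) {a : α} :
    a ∈ Nat.rfindOpt f ↔ ∃ n, a ∈ f n := by
  refine ⟨Nat.rfindOpt_spec, fun ⟨n, hn⟩ => ?_⟩
  have hdom : (Nat.rfindOpt f).Dom := Nat.rfindOpt_dom.2 ⟨n, a, hn⟩
  obtain ⟨m, hm⟩ := Nat.rfindOpt_spec (Part.get_mem hdom)
  rw [hf hn hm]
  exact Part.get_mem hdom

theorem Primrec.nat_ppred : Primrec Nat.ppred :=
  (Primrec.nat_casesOn₁ none Primrec.option_some).of_eq fun n => by cases n <;> rfl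

def graphEValue (t n : ℕ) : Option ℕ :=
  if n.unpair.1 = t then n.unpair.2.ppred else none

theorem primrec₂_graphEValue : Primrec₂ graphEValue :=
  Primrec.ite (Primrec.eq.comp (Primrec.fst.comp (Primrec.unpair.comp Primrec.snd)) Primrec.fst)
    (Primrec.nat_ppred.comp (Primrec.snd.comp (Primrec.unpair.comp Primrec.snd)))
    (Primrec.const none)

theorem graphEValue_eq_some_iff {t n z : ℕ} :
    graphEValue t n = some z ↔ n = Nat.pair t (z + 1) := by
  obtain ⟨a, b, rfl⟩ : ∃ a b, n = Nat.pair a b := ⟨_, _, (Nat.pair_unpair n).symm⟩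
  rw [graphEValue, Nat.unpair_pair]
  rcases b with _ | b <;> by_cases a = t <;> simp_all [Nat.ppred, Nat.pair_eq_pair]

theorem QGN1.partrec₂ {θ : ℕ → ℕ →. ℕ} (hθ : QGN1 θ) : Partrec₂ θ := by
  obtain ⟨h, hh, hrange⟩ := hθ
  have mem_range : ∀ {i x z},
      Nat.pair (Nat.pair i x) (z + 1) ∈ Set.range h ↔ θ i x = Part.some z := by
    intro i x z
    simp [hrange, Nat.pair_eq_pair]
  have value_of_entry : ∀ {i x z n},
      graphEValue (Nat.pair i x) (h n) = some z → θ i x = Part.some z :=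
    fun hn => mem_range.1 ⟨_, graphEValue_eq_some_iff.1 hn⟩
  have search : Partrec₂ fun i x => Nat.rfindOpt fun n => graphEValue (Nat.pair i x) (h n) :=
    Partrec.rfindOpt <| primrec₂_graphEValue.to_comp.comp
      (Primrec₂.natPair.to_comp.comp (Computable.fst.comp Computable.fst)
        (Computable.snd.comp Computable.fst)) (hh.comp Computable.snd)
  refine search.of_eq fun ⟨i, x⟩ => Part.ext fun z => ?_
  rw [Nat.mem_rfindOpt_iff_of_unique fun ha hb =>
      Part.some_inj.1 ((value_of_entry ha).symm.trans (value_of_entry hb)),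
    ← Part.eq_some_iff, ← mem_range]
  simp only [Option.mem_def, graphEValue_eq_some_iff, Set.mem_range]

theorem exists_computable₂_range_eq_graphE {F : ℕ → ℕ →. ℕ} (hF : Partrec₂ F) :
    ∃ k : ℕ → ℕ → ℕ, Computable₂ k ∧ ∀ j, Set.range (k j) = graphE (F j) := by
  obtain ⟨c, hc⟩ := Nat.Partrec.Code.exists_code.1 <| Partrec.nat_iff.1 <|
    hF.comp (Computable.fst.comp Computable.unpair) (Computable.snd.comp Computable.unpair)
  have eval_pair : ∀ j x, c.eval (Nat.pair j x) = F j x := by simp [hc]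
  -- `k j (pair x s)` is `pair x (z + 1)` if `F j x` halts with value `z` within `s` steps and
  -- `pair x 0` otherwise; `s = 0` never halts, so every `pair x 0` is enumerated
  let k (j n : ℕ) : ℕ :=
    Nat.pair n.unpair.1 (((c.evaln n.unpair.2 (Nat.pair j n.unpair.1)).map (· + 1)).getD 0)
  refine ⟨k, ?_, fun j => Set.ext fun y => ⟨?_, ?_⟩⟩
  · have hx : Primrec fun p : ℕ × ℕ => p.2.unpair.1 :=
      Primrec.fst.comp (Primrec.unpair.comp Primrec.snd)
    have hs : Primrec fun p : ℕ × ℕ => p.2.unpair.2 :=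
      Primrec.snd.comp (Primrec.unpair.comp Primrec.snd)
    exact (Primrec₂.natPair.comp hx <| Primrec.option_getD.comp
      (Primrec.option_map (Nat.Partrec.Code.primrec_evaln.comp
          ((hs.pair (Primrec.const c)).pair (Primrec₂.natPair.comp Primrec.fst hx)))
        (Primrec.succ.comp Primrec.snd).to₂) (Primrec.const 0)).to_comp
  · rintro ⟨n, rfl⟩
    obtain ⟨x, s, rfl⟩ : ∃ x s, n = Nat.pair x s := ⟨_, _, (Nat.pair_unpair n).symm⟩
    rcases hrun : c.evaln s (Nat.pair j x) with _ | z
    · exact Or.inl ⟨x, by simp [k, hrun]⟩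
    · have hz : z ∈ F j x := eval_pair j x ▸ Nat.Partrec.Code.evaln_sound hrun
      exact Or.inr ⟨x, z, Part.eq_some_iff.2 hz, by simp [k, hrun]⟩
  · rintro (⟨x, rfl⟩ | ⟨x, z, hxz, rfl⟩)
    · exact ⟨Nat.pair x 0, by simp [k, Nat.Partrec.Code.evaln]⟩
    · have hz : z ∈ c.eval (Nat.pair j x) := by simp [eval_pair, hxz]
      obtain ⟨s, hs⟩ := Nat.Partrec.Code.evaln_complete.1 hz
      exact ⟨Nat.pair x s, by simp [k, Option.mem_def.1 hs]⟩

theorem QGN2.exists_computable_index {A : Set ℕ} {θ : ℕ → ℕ →. ℕ} (hθ : QGN2 A θ)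
    {F : ℕ → ℕ →. ℕ} (hF : Partrec₂ F) :
    ∃ v : ℕ → ℕ, Computable v ∧ ∀ j, F j ∈ SA A → θ (v j) = F j := by
  obtain ⟨k, hk, hrange⟩ := exists_computable₂_range_eq_graphE hF
  obtain ⟨v, hv, hθv⟩ := hθ k hk
  exact ⟨v, hv, fun j hj => hθv j _ hj (hrange j)⟩

theorem isInitSeg_ite_lt {A : Set ℕ} {a : ℕ} (ha : a ∈ A) (p : Part ℕ) :
    IsInitSeg A (fun x => if x < a then p else Part.none) := by
  by_cases hp : p.Dom
  · exact Or.inr ⟨a, ha, by ext x; by_cases hx : x < a <;> simp [hx, hp]⟩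
  · exact Or.inl (by ext x; by_cases hx : x < a <;> simp [hx, hp])

theorem exists_phi_eq_some_apply_self {v : ℕ → ℕ} (hv : Computable v) :
    ∃ e, ∀ x, phi e x = Part.some (v e) := by
  have hconst : Partrec₂ fun (c : Code) (_ : ℕ) => Part.some (v (Encodable.encode c)) :=
    (hv.comp (Computable.encode.comp Computable.fst)).partrec
  obtain ⟨c, hc⟩ := Nat.Partrec.Code.fixed_point₂ hconst
  exact ⟨Encodable.encode c, fun x => by simp [phi, hc]⟩

def diagInitSeg (θ : ℕ → ℕ →. ℕ) (q : ℕ → ℕ) (a j x : ℕ) : Part ℕ :=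
  if x < a then (phi j 0).bind fun m => (θ (q m) 0).map (· + 1) else Part.none

theorem partrec₂_diagInitSeg {θ : ℕ → ℕ →. ℕ} (hθ : Partrec₂ θ) {q : ℕ → ℕ} (hq : Computable q)
    (a : ℕ) : Partrec₂ (diagInitSeg θ q a) := by
  have hphi : Partrec₂ phi :=
    Nat.Partrec.Code.eval_part.comp ((Computable.ofNat Code).comp Computable.fst) Computable.snd
  have hval : Partrec fun j => (phi j 0).bind fun m => (θ (q m) 0).map (· + 1) :=
    (hphi.comp Computable.id (Computable.const 0)).bind <|
      ((hθ.comp (hq.comp Computable.snd) (Computable.const 0)).map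
        (Computable.succ.comp Computable.snd).to₂).to₂
  refine (Partrec.cond (Primrec.nat_lt.comp Primrec.snd (Primrec.const a)).decide.to_comp
    (hval.comp Computable.fst) Partrec.none).of_eq fun ⟨j, x⟩ => ?_
  by_cases hx : x < a <;> simp [diagInitSeg, hx]

theorem no_effective_totalization_general (A : Set ℕ) (hAinf : A.Infinite)
    (θ : ℕ → ℕ →. ℕ) (hθ : QuasiGodel A θ) :
    ¬ ∃ q : ℕ → ℕ, Computable q ∧
        ∀ i, IsInitSeg A (θ i) →
          (∀ x, (θ (q i) x).Dom) ∧ pgraph (θ i) ⊂ pgraph (θ (q i)) := by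
  rintro ⟨q, hq, hext⟩
  obtain ⟨-, hθ₁, hθ₂⟩ := hθ
  obtain ⟨a, haA, ha⟩ := hAinf.exists_gt 0
  obtain ⟨v, hv, hθv⟩ := hθ₂.exists_computable_index (partrec₂_diagInitSeg hθ₁.partrec₂ hq a)
  obtain ⟨e, he⟩ := exists_phi_eq_some_apply_self hv
  have hinit : IsInitSeg A (diagInitSeg θ q a e) := isInitSeg_ite_lt haA _
  have hθve : θ (v e) = diagInitSeg θ q a e := hθv e (Or.inr hinit)
  obtain ⟨htot, hsub⟩ := hext (v e) (hθve ▸ hinit)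
  obtain ⟨z, hz⟩ : ∃ z, θ (q (v e)) 0 = Part.some z :=
    ⟨_, Part.eq_some_iff.2 (Part.get_mem (htot 0))⟩
  have hdiag : θ (v e) 0 = Part.some (z + 1) := by simp [hθve, diagInitSeg, ha, he, hz]
  obtain ⟨x, y, hxy, hpair⟩ := hsub.1 ⟨0, z + 1, hdiag, rfl⟩
  obtain ⟨rfl, rfl⟩ := Nat.pair_eq_pair.1 hpair
  simp [hz] at hxy

/-- No effective totalization: no total computable function can produce, from an index
of an initial-segment function, an index of a proper total extension of it. -/
theorem no_effective_totalization (A : Set ℕ) (hAinf : A.Infinite) (hAce : CEset A)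
    (θ : ℕ → ℕ →. ℕ) (hθ : QuasiGodel A θ) :
    ¬ ∃ q : ℕ → ℕ, Computable q ∧
        ∀ i, IsInitSeg A (θ i) →
          (∀ x, (θ (q i) x).Dom) ∧ pgraph (θ i) ⊂ pgraph (θ (q i)) :=
  no_effective_totalization_general A hAinf θ hθ
end

section
/- (The self-reproducibility problem) Let A ⊆ ℕ be an infinite computably enumerable set and let θ be a quasi-Gödel numbering of S_A. Define K^A = {i : ℕ | ∃ x, θ i x = Part.some i} (the set of i that belong to the range of θ i). Then K^A is computably enumerable but not computable: K^A = Set.range g for some total computable g : ℕ → ℕ, and the membership predicate of K^A is not decidable by any computable function. -/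
/-! `K^A` is c.e. because (QGN I) enumerates the graph of the universal function of `θ`, from
which the entries `θ i x = i` can be filtered out computably. It is not computable because
(QGN II), applied to a computable family of enumerations which enumerates the extended graph of
the identity or of the empty function according as the `i`-th program halts on `0`, yields a
computable `v` with `v i ∈ K^A` exactly when that program halts: a many-one reduction of the
halting problem. -/

open Nat.Partrec (Code)
open Nat.Partrec.Code

/-- The self-reproducibility problem `K^A` of a numbering `θ`. -/
def selfRepro (θ : ℕ → ℕ →. ℕ) : Set ℕ :=
  {i | ∃ x, θ i x = Part.some i}

lemma ComputablePred.comp {α β : Type*} [Primcodable α] [Primcodable β] {p : β → Prop}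
    (hp : ComputablePred p) {f : α → β} (hf : Computable f) : ComputablePred (p ∘ f) := by
  obtain ⟨_, hp⟩ := hp
  exact ⟨fun a => inferInstanceAs (Decidable (p (f a))), hp.comp hf⟩

lemma id_mem_SA (A : Set ℕ) : (fun x => Part.some x : ℕ →. ℕ) ∈ SA A :=
  Or.inl ⟨id, Computable.id, fun _ => rfl⟩

lemma none_mem_SA (A : Set ℕ) : (fun _ => Part.none : ℕ →. ℕ) ∈ SA A :=
  Or.inr (Or.inl (Set.eq_empty_of_forall_notMem fun _ => Part.not_none_dom (α := ℕ)))

lemma graphE_none : graphE (fun _ => Part.none) = {n | ∃ y, n = Nat.pair y 0} := by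
  simp [graphE, Part.none_ne_some]

/-- Reads an entry `⟪⟪i, x⟫, z + 1⟫` of an enumeration of the extended graph of the universal
function as `i` when `z = i`, and as the default `i₀` otherwise. -/
def selfReproDecode (i₀ m : ℕ) : ℕ :=
  if m.unpair.2 = m.unpair.1.unpair.1 + 1 then m.unpair.1.unpair.1 else i₀

lemma primrec_selfReproDecode (i₀ : ℕ) : Primrec (selfReproDecode i₀) := by
  have hi : Primrec fun m : ℕ => m.unpair.1.unpair.1 :=
    (Primrec.fst.comp Primrec.unpair).comp (Primrec.fst.comp Primrec.unpair)
  exact Primrec.ite (Primrec.eq.comp (Primrec.snd.comp Primrec.unpair) (Primrec.succ.comp hi))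
    hi (Primrec.const i₀)

theorem QGN1.exists_computable_range_eq_selfRepro {θ : ℕ → ℕ →. ℕ} (h1 : QGN1 θ) {i₀ : ℕ}
    (hi₀ : i₀ ∈ selfRepro θ) : ∃ g : ℕ → ℕ, Computable g ∧ selfRepro θ = Set.range g := by
  obtain ⟨h, hh, hrange⟩ := h1
  refine ⟨selfReproDecode i₀ ∘ h, (primrec_selfReproDecode i₀).to_comp.comp hh, ?_⟩
  ext i
  constructor
  · rintro ⟨x, hx⟩
    obtain ⟨n, hn⟩ : Nat.pair (Nat.pair i x) (i + 1) ∈ Set.range h :=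
      hrange ▸ Or.inr ⟨i, x, i, hx, rfl⟩
    exact ⟨n, by simp [hn, selfReproDecode]⟩
  · rintro ⟨n, rfl⟩
    obtain ⟨w, hw⟩ | ⟨j, x, z, hjx, hw⟩ : h n ∈ _ := hrange ▸ Set.mem_range_self n
    · simpa [selfReproDecode, hw] using hi₀
    · by_cases hzj : z = j
      · subst hzj
        simpa [selfReproDecode, hw] using ⟨x, hjx⟩
      · simpa [selfReproDecode, hw, hzj] using hi₀

def haltingEnum (c : Code) (n : ℕ) : ℕ :=
  if (evaln n.unpair.1 c 0).isSome then Nat.pair n.unpair.2 (n.unpair.2 + 1)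
  else Nat.pair n.unpair.2 0

lemma primrec₂_haltingEnum : Primrec₂ haltingEnum := by
  have hs : Primrec fun p : Code × ℕ => evaln p.2.unpair.1 p.1 0 :=
    primrec_evaln.comp
      (((Primrec.fst.comp Primrec.unpair).comp Primrec.snd).pair Primrec.fst |>.pair
        (Primrec.const 0))
  have hx : Primrec fun p : Code × ℕ => p.2.unpair.2 :=
    (Primrec.snd.comp Primrec.unpair).comp Primrec.snd
  exact Primrec.ite (Primrec.eq.comp (Primrec.option_isSome.comp hs) (Primrec.const true))
    (Primrec₂.natPair.comp hx (Primrec.succ.comp hx)) (Primrec₂.natPair.comp hx (Primrec.const 0))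

lemma range_haltingEnum_of_dom {c : Code} (hc : (c.eval 0).Dom) :
    Set.range (haltingEnum c) = graphE (fun x => Part.some x) := by
  obtain ⟨s, hs⟩ := evaln_complete.1 (Part.get_mem hc)
  have hhalt : (evaln s c 0).isSome := Option.isSome_iff_exists.2 ⟨_, hs⟩
  ext n
  constructor
  · rintro ⟨m, rfl⟩
    unfold haltingEnum
    split
    · exact Or.inr ⟨m.unpair.2, m.unpair.2, rfl, rfl⟩
    · exact Or.inl ⟨m.unpair.2, rfl⟩
  · rintro (⟨y, rfl⟩ | ⟨x, z, hxz, rfl⟩)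
    · exact ⟨Nat.pair 0 y, by simp [haltingEnum, evaln]⟩
    · obtain rfl : x = z := by simpa using hxz
      exact ⟨Nat.pair s x, by simp [haltingEnum, hhalt]⟩

lemma range_haltingEnum_of_not_dom {c : Code} (hc : ¬(c.eval 0).Dom) :
    Set.range (haltingEnum c) = graphE (fun _ => Part.none) := by
  have hdiv : ∀ s, (evaln s c 0).isSome = false := fun s =>
    Bool.eq_false_iff.2 <| Option.not_isSome_iff_eq_none.2 <|
      Option.eq_none_iff_forall_not_mem.2 fun y hy => hc (Part.dom_iff_mem.2 ⟨y, evaln_sound hy⟩)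
  rw [graphE_none]
  ext n
  constructor
  · rintro ⟨m, rfl⟩
    exact ⟨m.unpair.2, by simp [haltingEnum, hdiv]⟩
  · rintro ⟨y, rfl⟩
    exact ⟨Nat.pair 0 y, by simp [haltingEnum, hdiv]⟩

theorem QGN2.not_computablePred_selfRepro {A : Set ℕ} {θ : ℕ → ℕ →. ℕ} (h2 : QGN2 A θ) :
    ¬ComputablePred (· ∈ selfRepro θ) := by
  intro hK
  obtain ⟨v, hv, hθv⟩ := h2 (fun i => haltingEnum (Denumerable.ofNat Code i))
    (primrec₂_haltingEnum.comp (Primrec.ofNat Code |>.comp Primrec.fst) Primrec.snd).to_comp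
  have hreduce (c : Code) : v (Encodable.encode c) ∈ selfRepro θ ↔ (c.eval 0).Dom := by
    by_cases hc : (c.eval 0).Dom
    · have hid := hθv (Encodable.encode c) _ (id_mem_SA A)
        (by simpa using range_haltingEnum_of_dom hc)
      exact iff_of_true ⟨_, by rw [hid]⟩ hc
    · have hnone := hθv (Encodable.encode c) _ (none_mem_SA A)
        (by simpa using range_haltingEnum_of_not_dom hc)
      exact iff_of_false (fun ⟨x, hx⟩ => Part.none_ne_some _ (by rwa [hnone] at hx)) hc
  exact ComputablePred.halting_problem 0 ((hK.comp (hv.comp Computable.encode)).of_eq hreduce)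

theorem selfReproducibility_ce_not_computable_general (A : Set ℕ) (θ : ℕ → ℕ →. ℕ)
    (hθ : QuasiGodel A θ) :
    (∃ g : ℕ → ℕ, Computable g ∧
        {i : ℕ | ∃ x, θ i x = Part.some i} = Set.range g) ∧
    ¬ ComputablePred (fun i => ∃ x, θ i x = Part.some i) := by
  obtain ⟨hrange, h1, h2⟩ := hθ
  obtain ⟨i₀, hi₀⟩ : (fun x => Part.some x) ∈ Set.range θ := hrange ▸ id_mem_SA A
  exact ⟨h1.exists_computable_range_eq_selfRepro ⟨i₀, by rw [hi₀]⟩,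
    h2.not_computablePred_selfRepro⟩

/-- The self-reproducibility problem `K^A` is computably enumerable but not computable. -/
theorem selfReproducibility_ce_not_computable (A : Set ℕ) (hAinf : A.Infinite)
    (hAce : CEset A) (θ : ℕ → ℕ →. ℕ) (hθ : QuasiGodel A θ) :
    (∃ g : ℕ → ℕ, Computable g ∧
        {i : ℕ | ∃ x, θ i x = Part.some i} = Set.range g) ∧
    ¬ ComputablePred (fun i => ∃ x, θ i x = Part.some i) :=
  selfReproducibility_ce_not_computable_general A θ hθ
end
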